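/- Fix reals Ξ > 1, c > -1, Z > 0, ν, and a continuous function ρ : [1,Ξ] → ℝ. Define W(X) := √(X+c)/√Z − ν + (1/2)·∫₁^Ξ ρ(T) dT /((√(X+c)+√(T+c))·√(T+c)) and, for l ∈ ℕ, ρ_l := δ_{l,0}/√Z − (1/2)·∫₁^Ξ ρ(T)·(T+c)^{-(3+2l)/2} dT, where δ_{l,0} is the Kronecker delta. Then for every j ∈ ℕ and every X ≥ 1: (W(X)+ν)·(X+c)^{-(3+2j)/2} + (1/2)·∫₁^Ξ ρ(T)·((X+c)^{-(3+2j)/2} − (T+c)^{-(3+2j)/2})/(X−T) dT = Σ_{l=0}^{j} ρ_l·(X+c)^{-(j−l+1)}, where the integrand is extended continuously to T = X. -/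
import Mathlib


open MeasureTheory

lemma aux_sum (a b : ℝ) : ∀ j : ℕ,
    ∑ k ∈ Finset.range (3 + 2 * j), b ^ k * a ^ (3 + 2 * j - 1 - k)
      = b ^ (2 * j + 2) + a * (a + b) * ∑ l ∈ Finset.range (j + 1), b ^ (2 * (j - l)) * a ^ (2 * l) := by
  intro j
  induction j with
  | zero => simp [Finset.sum_range_succ]; ring
  | succ j ih =>
    have h1 : 3 + 2 * (j + 1) = (3 + 2 * j) + 1 + 1 := by ring
    rw [h1, Finset.sum_range_succ, Finset.sum_range_succ]
    have h2 : ∑ k ∈ Finset.range (3 + 2 * j), b ^ k * a ^ ((3 + 2 * j) + 1 + 1 - 1 - k)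
        = (∑ k ∈ Finset.range (3 + 2 * j), b ^ k * a ^ (3 + 2 * j - 1 - k)) * a ^ 2 := by
      rw [Finset.sum_mul]
      refine Finset.sum_congr rfl fun k hk => ?_
      rw [Finset.mem_range] at hk
      have : (3 + 2 * j) + 1 + 1 - 1 - k = (3 + 2 * j - 1 - k) + 2 := by omega
      rw [this, pow_add]; ring
    rw [h2, ih]
    have h3 : ∑ l ∈ Finset.range (j + 1 + 1), b ^ (2 * (j + 1 - l)) * a ^ (2 * l)
        = (∑ l ∈ Finset.range (j + 1), b ^ (2 * (j - l)) * a ^ (2 * l)) * a ^ 2 + b ^ (2 * (j + 1)) := by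
      rw [Finset.sum_range_succ', Finset.sum_mul]
      congr 1
      · refine Finset.sum_congr rfl fun l hl => ?_
        have : 2 * (j + 1 - (l + 1)) = 2 * (j - l) := by omega
        rw [this, pow_succ, pow_mul, pow_mul]; ring
      · simp
    rw [h3]
    have e1 : (3 + 2 * j) + 1 + 1 - 1 - (3 + 2 * j) = 1 := by omega
    have e2 : (3 + 2 * j) + 1 + 1 - 1 - (3 + 2 * j + 1) = 0 := by omega
    rw [e1, e2]
    ring

lemma aux_pt (j : ℕ) (a b : ℝ) (ha : 0 < a) (hb : 0 < b) :
    1 / ((a + b) * b) * (a ^ (3 + 2 * j))⁻¹ +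
      (-(∑ k ∈ Finset.range (3 + 2 * j), b ^ k * a ^ (3 + 2 * j - 1 - k))) /
        ((a + b) * (a ^ (3 + 2 * j) * b ^ (3 + 2 * j)))
    = -∑ l ∈ Finset.range (j + 1), ((a ^ 2) ^ (j + 1 - l))⁻¹ * (b ^ (3 + 2 * l))⁻¹ := by
  have key : ∀ l ∈ Finset.range (j + 1),
      ((a ^ 2) ^ (j + 1 - l))⁻¹ * (b ^ (3 + 2 * l))⁻¹
        = b ^ (2 * (j - l)) * a ^ (2 * l) * ((a ^ (2 * j + 2) * b ^ (2 * j + 3)))⁻¹ := by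
    intro l hl
    rw [Finset.mem_range] at hl
    have h1 : (a ^ 2) ^ (j + 1 - l) * a ^ (2 * l) = a ^ (2 * j + 2) := by
      rw [← pow_mul, ← pow_add]; congr 1; omega
    have h2 : b ^ (3 + 2 * l) * b ^ (2 * (j - l)) = b ^ (2 * j + 3) := by
      rw [← pow_add]; congr 1; omega
    have ha2 : (0:ℝ) < (a ^ 2) ^ (j + 1 - l) := by positivity
    have hb2 : (0:ℝ) < b ^ (3 + 2 * l) := by positivity
    field_simp
    rw [← h1, ← h2]; ring
  rw [Finset.sum_congr rfl key, ← Finset.sum_mul, aux_sum a b j]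
  have h0 : (0:ℝ) < a + b := by linarith
  field_simp
  ring

/-- Action of the Schwinger–Dyson operator on the basis functions `(X+c)^{-(3+2j)/2}`:
`(W(X)+ν)(X+c)^{-(3+2j)/2} + (1/2)∫₁^Ξ ρ(T)((X+c)^{-(3+2j)/2}−(T+c)^{-(3+2j)/2})/(X−T) dT
  = Σ_{l=0}^{j} ρ_l (X+c)^{-(j−l+1)}`,
the integrand being extended continuously to `T = X`. -/
theorem stmt_10 (Ξ c Z ν : ℝ) (hΞ : 1 < Ξ) (hc : -1 < c) (hZ : 0 < Z)
    (ρ : ℝ → ℝ) (hρ : ContinuousOn ρ (Set.Icc 1 Ξ))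
    (W : ℝ → ℝ)
    (hW : ∀ X, W X = Real.sqrt (X + c) / Real.sqrt Z - ν +
      (1 / 2) * ∫ T in (1 : ℝ)..Ξ,
        ρ T / ((Real.sqrt (X + c) + Real.sqrt (T + c)) * Real.sqrt (T + c)))
    (ρl : ℕ → ℝ)
    (hρl : ∀ l, ρl l = (if l = 0 then 1 / Real.sqrt Z else 0) -
      (1 / 2) * ∫ T in (1 : ℝ)..Ξ, ρ T / Real.sqrt (T + c) ^ (3 + 2 * l)) :
    ∀ (j : ℕ) (X : ℝ), 1 ≤ X →
      ∃ F : ℝ → ℝ, ContinuousOn F (Set.Icc 1 Ξ) ∧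
        (∀ T ∈ Set.Icc 1 Ξ, T ≠ X → F T = ρ T *
          ((Real.sqrt (X + c) ^ (3 + 2 * j))⁻¹ - (Real.sqrt (T + c) ^ (3 + 2 * j))⁻¹) /
            (X - T)) ∧
        (W X + ν) * (Real.sqrt (X + c) ^ (3 + 2 * j))⁻¹ +
            (1 / 2) * ∫ T in (1 : ℝ)..Ξ, F T
          = ∑ l ∈ Finset.range (j + 1), ρl l * ((X + c) ^ (j + 1 - l))⁻¹ := by
  intro j X hX
  have hXc : 0 < X + c := by linarith
  have ha : 0 < Real.sqrt (X + c) := Real.sqrt_pos.mpr hXc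
  have hTc : ∀ T ∈ Set.Icc (1:ℝ) Ξ, 0 < T + c := fun T hT => by have := hT.1; linarith
  have hb : ∀ T ∈ Set.Icc (1:ℝ) Ξ, 0 < Real.sqrt (T + c) :=
    fun T hT => Real.sqrt_pos.mpr (hTc T hT)
  have hcb : Continuous fun T : ℝ => Real.sqrt (T + c) :=
    Real.continuous_sqrt.comp (continuous_id.add continuous_const)
  set F : ℝ → ℝ := fun T =>
    ρ T * (-(∑ k ∈ Finset.range (3 + 2 * j),
        Real.sqrt (T + c) ^ k * Real.sqrt (X + c) ^ (3 + 2 * j - 1 - k))) /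
      ((Real.sqrt (X + c) + Real.sqrt (T + c)) *
        (Real.sqrt (X + c) ^ (3 + 2 * j) * Real.sqrt (T + c) ^ (3 + 2 * j))) with hFdef
  have hden : ∀ T ∈ Set.Icc (1:ℝ) Ξ,
      (Real.sqrt (X + c) + Real.sqrt (T + c)) *
        (Real.sqrt (X + c) ^ (3 + 2 * j) * Real.sqrt (T + c) ^ (3 + 2 * j)) ≠ 0 := by
    intro T hT
    exact ne_of_gt (mul_pos (add_pos ha (hb T hT))
      (mul_pos (pow_pos ha _) (pow_pos (hb T hT) _)))
  have hFcont : ContinuousOn F (Set.Icc 1 Ξ) := by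
    apply ContinuousOn.div
    · exact hρ.mul (Continuous.continuousOn (by
        exact (continuous_finset_sum _ fun k _ => (hcb.pow k).mul continuous_const).neg))
    · exact Continuous.continuousOn (by
        exact (continuous_const.add hcb).mul (continuous_const.mul (hcb.pow _)))
    · exact hden
  refine ⟨F, hFcont, ?_, ?_⟩
  · -- off-diagonal formula
    intro T hT hTX
    have hbT := hb T hT
    have hab : Real.sqrt (X + c) ≠ Real.sqrt (T + c) := by
      intro h
      apply hTX
      have : X + c = T + c := by
        rw [← Real.sq_sqrt hXc.le, ← Real.sq_sqrt (hTc T hT).le, h]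
      linarith
    have hXT : X - T = Real.sqrt (X + c) ^ 2 - Real.sqrt (T + c) ^ 2 := by
      rw [Real.sq_sqrt hXc.le, Real.sq_sqrt (hTc T hT).le]; ring
    have hgeom := geom_sum₂_mul (Real.sqrt (T + c)) (Real.sqrt (X + c)) (3 + 2 * j)
    have hinv : (Real.sqrt (X + c) ^ (3 + 2 * j))⁻¹ - (Real.sqrt (T + c) ^ (3 + 2 * j))⁻¹
        = (∑ k ∈ Finset.range (3 + 2 * j),
            Real.sqrt (T + c) ^ k * Real.sqrt (X + c) ^ (3 + 2 * j - 1 - k))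
            * (Real.sqrt (T + c) - Real.sqrt (X + c))
          / (Real.sqrt (X + c) ^ (3 + 2 * j) * Real.sqrt (T + c) ^ (3 + 2 * j)) := by
      rw [inv_sub_inv (pow_ne_zero _ ha.ne') (pow_ne_zero _ hbT.ne'), hgeom]
    rw [hFdef, hinv, hXT]
    have h1 : Real.sqrt (X + c) - Real.sqrt (T + c) ≠ 0 := sub_ne_zero.mpr hab
    have h2 : Real.sqrt (X + c) + Real.sqrt (T + c) ≠ 0 := ne_of_gt (add_pos ha hbT)
    have h3 : Real.sqrt (X + c) ^ 2 - Real.sqrt (T + c) ^ 2 ≠ 0 := by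
      intro h; exact h1 (by nlinarith [sq_nonneg (Real.sqrt (X+c) + Real.sqrt (T+c))])
    rw [show ρ T * ((∑ k ∈ Finset.range (3 + 2 * j),
          Real.sqrt (T + c) ^ k * Real.sqrt (X + c) ^ (3 + 2 * j - 1 - k))
          * (Real.sqrt (T + c) - Real.sqrt (X + c))
        / (Real.sqrt (X + c) ^ (3 + 2 * j) * Real.sqrt (T + c) ^ (3 + 2 * j)))
        = ρ T * ((∑ k ∈ Finset.range (3 + 2 * j),
          Real.sqrt (T + c) ^ k * Real.sqrt (X + c) ^ (3 + 2 * j - 1 - k))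
          * (Real.sqrt (T + c) - Real.sqrt (X + c)))
        / (Real.sqrt (X + c) ^ (3 + 2 * j) * Real.sqrt (T + c) ^ (3 + 2 * j))
      from (mul_div_assoc _ _ _).symm, div_div, div_eq_div_iff (hden T hT)
        (mul_ne_zero (mul_ne_zero (pow_ne_zero _ ha.ne') (pow_ne_zero _ hbT.ne')) h3)]
    ring
  · -- the integral identity
    have hAe : Real.sqrt (X + c) * (Real.sqrt (X + c) ^ (3 + 2 * j))⁻¹
        = ((X + c) ^ (j + 1))⁻¹ := by
      have hsplit : Real.sqrt (X + c) ^ (3 + 2 * j)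
          = Real.sqrt (X + c) * (X + c) ^ (j + 1) := by
        rw [show 3 + 2 * j = 1 + 2 * (j + 1) by omega, pow_add, pow_mul,
          Real.sq_sqrt hXc.le, pow_one]
      rw [hsplit, mul_inv, ← mul_assoc, mul_inv_cancel₀ ha.ne', one_mul]
    have hIl : ∀ l : ℕ, IntervalIntegrable
        (fun T => ρ T / Real.sqrt (T + c) ^ (3 + 2 * l)) volume 1 Ξ := by
      intro l
      apply ContinuousOn.intervalIntegrable
      rw [Set.uIcc_of_le hΞ.le]
      exact hρ.div ((hcb.pow _).continuousOn)
        (fun T hT => pow_ne_zero _ (hb T hT).ne')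
    have hgInt : IntervalIntegrable (fun T =>
        ρ T / ((Real.sqrt (X + c) + Real.sqrt (T + c)) * Real.sqrt (T + c)) *
          (Real.sqrt (X + c) ^ (3 + 2 * j))⁻¹) volume 1 Ξ := by
      apply ContinuousOn.intervalIntegrable
      rw [Set.uIcc_of_le hΞ.le]
      exact (hρ.div (Continuous.continuousOn (by
          exact (continuous_const.add hcb).mul hcb))
        (fun T hT => ne_of_gt (mul_pos (add_pos ha (hb T hT)) (hb T hT)))).mul
        continuousOn_const
    have hFInt : IntervalIntegrable F volume 1 Ξ := by
      apply ContinuousOn.intervalIntegrable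
      rwa [Set.uIcc_of_le hΞ.le]
    have keyInt :
        (∫ T in (1:ℝ)..Ξ, ρ T / ((Real.sqrt (X + c) + Real.sqrt (T + c)) * Real.sqrt (T + c)))
            * (Real.sqrt (X + c) ^ (3 + 2 * j))⁻¹
          + (∫ T in (1:ℝ)..Ξ, F T)
        = -∑ l ∈ Finset.range (j + 1), ((X + c) ^ (j + 1 - l))⁻¹ *
            ∫ T in (1:ℝ)..Ξ, ρ T / Real.sqrt (T + c) ^ (3 + 2 * l) := by
      rw [← intervalIntegral.integral_mul_const,
        ← intervalIntegral.integral_add hgInt hFInt]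
      have hcongr : Set.EqOn
          (fun T => ρ T / ((Real.sqrt (X + c) + Real.sqrt (T + c)) * Real.sqrt (T + c)) *
              (Real.sqrt (X + c) ^ (3 + 2 * j))⁻¹ + F T)
          (fun T => ∑ l ∈ Finset.range (j + 1),
            -(((X + c) ^ (j + 1 - l))⁻¹) * (ρ T / Real.sqrt (T + c) ^ (3 + 2 * l)))
          (Set.uIcc 1 Ξ) := by
        rw [Set.uIcc_of_le hΞ.le]
        intro T hT
        have hbT := hb T hT
        have hpt := aux_pt j (Real.sqrt (X + c)) (Real.sqrt (T + c)) ha hbT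
        have hx2 : Real.sqrt (X + c) ^ 2 = X + c := Real.sq_sqrt hXc.le
        simp only
        calc ρ T / ((Real.sqrt (X + c) + Real.sqrt (T + c)) * Real.sqrt (T + c)) *
              (Real.sqrt (X + c) ^ (3 + 2 * j))⁻¹ + F T
            = ρ T * (1 / ((Real.sqrt (X + c) + Real.sqrt (T + c)) * Real.sqrt (T + c)) *
                (Real.sqrt (X + c) ^ (3 + 2 * j))⁻¹ +
              (-(∑ k ∈ Finset.range (3 + 2 * j),
                  Real.sqrt (T + c) ^ k * Real.sqrt (X + c) ^ (3 + 2 * j - 1 - k))) /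
                ((Real.sqrt (X + c) + Real.sqrt (T + c)) *
                  (Real.sqrt (X + c) ^ (3 + 2 * j) * Real.sqrt (T + c) ^ (3 + 2 * j)))) := by
              rw [hFdef]; ring
          _ = ρ T * (-∑ l ∈ Finset.range (j + 1),
                ((Real.sqrt (X + c) ^ 2) ^ (j + 1 - l))⁻¹ *
                  (Real.sqrt (T + c) ^ (3 + 2 * l))⁻¹) := by rw [hpt]
          _ = ∑ l ∈ Finset.range (j + 1),
                -(((X + c) ^ (j + 1 - l))⁻¹) * (ρ T / Real.sqrt (T + c) ^ (3 + 2 * l)) := by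
              rw [hx2, mul_neg, Finset.mul_sum, ← Finset.sum_neg_distrib]
              exact Finset.sum_congr rfl fun l _ => by ring
      rw [intervalIntegral.integral_congr hcongr]
      rw [intervalIntegral.integral_finset_sum (fun l _ => (hIl l).const_mul _)]
      rw [← Finset.sum_neg_distrib]
      refine Finset.sum_congr rfl fun l _ => ?_
      rw [intervalIntegral.integral_const_mul]
      ring
    have hRHS : ∑ l ∈ Finset.range (j + 1), ρl l * ((X + c) ^ (j + 1 - l))⁻¹
        = 1 / Real.sqrt Z * ((X + c) ^ (j + 1))⁻¹
          - (1 / 2) * ∑ l ∈ Finset.range (j + 1), ((X + c) ^ (j + 1 - l))⁻¹ *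
              ∫ T in (1:ℝ)..Ξ, ρ T / Real.sqrt (T + c) ^ (3 + 2 * l) := by
      simp only [hρl, sub_mul]
      rw [Finset.sum_sub_distrib]
      congr 1
      · simp only [ite_mul, zero_mul]
        rw [Finset.sum_ite_eq']
        simp
      · rw [Finset.mul_sum]
        exact Finset.sum_congr rfl fun l _ => by ring
    rw [hW, hRHS]
    linear_combination (1 / 2) * keyInt + (Real.sqrt Z)⁻¹ * hAe
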